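/- Let T be an infinite locally finite rooted tree and suppose every vertex of T has at least one child. If T' is obtained from T by subdividing each edge e into a path of f(|e|) edges for a nondecreasing function f: ℕ → ℕ with f(x) = ⌈x^s⌉ for some s > 0, and T is the 1-3 tree, then Igr(T') = 1/(1+s). -/

import Mathlib

open Filter ENNReal

namespace TreeNotions

variable {α : Type}

/-- Vertices (equivalently, edges indexed by their upper endpoint) at level `n`. -/
def level (T : Set (List α)) (n : ℕ) : Set (List α) := {v ∈ T | v.length = n}

/-- The ball of radius `n` around the root. -/
def ball (T : Set (List α)) (n : ℕ) : Set (List α) := {v ∈ T | v.length ≤ n}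

/-- An infinite simple path from the root. -/
def IsRay (T : Set (List α)) (r : ℕ → List α) : Prop :=
  r 0 = [] ∧ ∀ n, r n ∈ T ∧ ∃ a, r (n + 1) = r n ++ [a]

/-- A cutset separating the root from infinity: a set of edges (identified with their
upper endpoints) meeting every infinite simple path from the root. -/
def IsCutset (T : Set (List α)) (π : Set (List α)) : Prop :=
  (∀ v ∈ π, v ∈ T ∧ v ≠ []) ∧ ∀ r, IsRay T r → ∃ n, r n ∈ π

/-- An infinite, locally finite, rooted (prefix-closed) tree of words. -/
def IsTree (T : Set (List α)) : Prop :=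
  [] ∈ T ∧ (∀ v ∈ T, v.dropLast ∈ T) ∧ (∀ v ∈ T, {a : α | v ++ [a] ∈ T}.Finite) ∧ T.Infinite

/-- The branching number. -/
noncomputable def br (T : Set (List α)) : ℝ≥0∞ :=
  sSup {lam : ℝ≥0∞ | 0 < lam ∧
    0 < ⨅ (π) (_ : IsCutset T π), ∑' e : π, lam⁻¹ ^ (e : List α).length}

/-- The lower exponential growth rate. -/
noncomputable def gr (T : Set (List α)) : ℝ≥0∞ :=
  Filter.liminf (fun n => (Nat.card (level T n) : ℝ≥0∞) ^ ((n : ℝ)⁻¹)) atTop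

/-- The intermediate branching number (with `sSup ∅ = 0`). -/
noncomputable def Ibr (T : Set (List α)) : ℝ :=
  sSup {lam : ℝ | 0 < lam ∧
    0 < ⨅ (π) (_ : IsCutset T π),
      ∑' e : π, ENNReal.ofReal (Real.exp (-((e : List α).length : ℝ) ^ lam))}

/-- The intermediate growth rate (with `sSup ∅ = 0`). -/
noncomputable def Igr (T : Set (List α)) : ℝ :=
  sSup {lam : ℝ | 0 < lam ∧
    0 < Filter.liminf
      (fun n => ∑' _e : level T n, ENNReal.ofReal (Real.exp (-(n : ℝ) ^ lam))) atTop}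

/-- The branching-ruin number (with `sSup ∅ = 0`). -/
noncomputable def brr (T : Set (List α)) : ℝ :=
  sSup {lam : ℝ | 0 < lam ∧
    0 < ⨅ (π) (_ : IsCutset T π),
      ∑' e : π, ENNReal.ofReal (((e : List α).length : ℝ) ^ (-lam))}

/-- The polynomial growth rate (with `sSup ∅ = 0`). -/
noncomputable def grr (T : Set (List α)) : ℝ :=
  sSup {lam : ℝ | 0 < lam ∧
    0 < Filter.liminf
      (fun n => ∑' _e : level T n, ENNReal.ofReal ((n : ℝ) ^ (-lam))) atTop}

/-- The descendant subtree of a vertex `w`. -/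
def desc (T : Set (List α)) (w : List α) : Set (List α) := {v ∈ T | w <+: v}

/-- Adjacency in a tree of words. -/
def Adj (u v : List α) : Prop := (∃ a, v = u ++ [a]) ∨ ∃ a, u = v ++ [a]

/-- A tree of words is subperiodic if for some `N ≥ 0`, every vertex `x` admits an
adjacency-preserving injection from `T^x` to `T^{f(x)}` with `|f(x)| ≤ N`. -/
def IsSubperiodic (T : Set (List α)) : Prop :=
  ∃ N : ℕ, ∀ w ∈ T, ∃ f : List α → List α,
    f w ∈ T ∧ (f w).length ≤ N ∧ Set.InjOn f (desc T w) ∧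
    Set.MapsTo f (desc T w) (desc T (f w)) ∧
    ∀ u ∈ desc T w, ∀ v ∈ desc T w, Adj u v → Adj (f u) (f v)

/-- Number of children of the `i`-th vertex (from the left) at level `n` of the 1-3 tree. -/
def childCount (n i : ℕ) : ℕ := if n = 0 then 2 else if i < 2 ^ (n - 1) then 1 else 3

/-- The ordered list of (labelled) vertices at level `n` of the 1-3 tree. -/
def T13Level : ℕ → List (List ℕ)
  | 0 => [[]]
  | n + 1 => (T13Level n).zipIdx.flatMap fun p => (List.range (childCount n p.2)).map fun j => p.1 ++ [j]

/-- The 1-3 tree, as a set of labelled words. -/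
def T13 : Set (List ℕ) := {w | ∃ n, w ∈ T13Level n}

/-- Replace the letter at level `k + 1` by that letter followed by `k` zeros:
the edge at level `k + 1` is subdivided into a path of `k + 1` edges. -/
def expandFrom : ℕ → List ℕ → List ℕ
  | _, [] => []
  | k, a :: rest => (a :: List.replicate k 0) ++ expandFrom (k + 1) rest

/-- The subdivided 1-3 tree `T₀`: each level-`n` edge of the 1-3 tree becomes a path of
`n` edges. -/
def T0 : Set (List ℕ) := {u | ∃ w ∈ T13, u <+: expandFrom 0 w}

/-- The prefix of length `n` of a sequence. -/
def pref (x : ℕ → ℕ) (n : ℕ) : List ℕ := (List.range n).map x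

/-- The set of sequences coded by `T₀` (its rays). -/
def E0 : Set (ℕ → ℕ) := {x | ∀ n, pref x n ∈ T0}

/-- The left shift map. -/
def shift (x : ℕ → ℕ) : ℕ → ℕ := fun n => x (n + 1)

/-- The shift closure of `E₀`. -/
def Etilde : Set (ℕ → ℕ) := ⋃ j : ℕ, shift^[j] '' E0

/-- The prefix tree `Φ(E)` of a set of sequences. -/
def treeOf (E : Set (ℕ → ℕ)) : Set (List ℕ) := {w | ∃ x ∈ E, ∃ n, w = pref x n}

/-- The tree `T̃ = Φ(Ẽ)`. -/
def Ttilde : Set (List ℕ) := treeOf Etilde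

end TreeNotions

namespace TreeNotions

/-- Subdivide the edge at level `k + 1` into a path of `⌈(k+1)^s⌉` edges. -/
noncomputable def expandPow (s : ℝ) : ℕ → List ℕ → List ℕ
  | _, [] => []
  | k, a :: rest => (a :: List.replicate (⌈((k : ℝ) + 1) ^ s⌉₊ - 1) 0) ++ expandPow s (k + 1) rest

/-- The 1-3 tree with each level-`n` edge subdivided into a path of `⌈n^s⌉` edges. -/
noncomputable def T0pow (s : ℝ) : Set (List ℕ) := {u | ∃ w ∈ T13, u <+: expandPow s 0 w}

/-! ### Auxiliary lemmas -/

lemma length_of_mem_T13Level : ∀ n, ∀ w ∈ T13Level n, w.length = n := by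
  intro n
  induction n with
  | zero => intro w hw; simp [T13Level] at hw; simp [hw]
  | succ n ih =>
    intro w hw
    simp only [T13Level, List.mem_flatMap, List.mem_map] at hw
    obtain ⟨p, hp, j, _, rfl⟩ := hw
    have hp2 : p.1 ∈ T13Level n := List.fst_mem_of_mem_zipIdx hp
    simp [ih p.1 hp2]

lemma mem_T13Level_snd {n : ℕ} {p : List ℕ × ℕ} (hp : p ∈ (T13Level n).zipIdx) :
    p.1 ∈ T13Level n :=
  List.fst_mem_of_mem_zipIdx hp

lemma take_mem_T13Level : ∀ n, ∀ w ∈ T13Level n, ∀ m, m ≤ n → w.take m ∈ T13Level m := by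
  intro n
  induction n with
  | zero => intro w hw m hm; interval_cases m; simp [T13Level]
  | succ n ih =>
    intro w hw m hm
    simp only [T13Level, List.mem_flatMap, List.mem_map] at hw
    obtain ⟨p, hp, j, hj, rfl⟩ := hw
    have hp2 : p.1 ∈ T13Level n := mem_T13Level_snd hp
    have hlen : p.1.length = n := length_of_mem_T13Level n p.1 hp2
    rcases Nat.lt_or_ge m (n + 1) with h | h
    · have hmn : m ≤ n := Nat.lt_succ_iff.1 h
      have : (p.1 ++ [j]).take m = p.1.take m := by
        rw [List.take_append]
        have : m - p.1.length = 0 := by omega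
        simp [this]
      rw [this]
      exact ih p.1 hp2 m hmn
    · have hm1 : m = n + 1 := le_antisymm hm h
      subst hm1
      have : (p.1 ++ [j]).length = n + 1 := by simp [hlen]
      rw [List.take_of_length_le (by omega)]
      simp only [T13Level, List.mem_flatMap, List.mem_map]
      exact ⟨p, hp, j, hj, rfl⟩

lemma nodup_T13Level : ∀ n, (T13Level n).Nodup := by
  intro n
  induction n with
  | zero => simp [T13Level]
  | succ n ih =>
    rw [T13Level, List.nodup_flatMap]
    constructor
    · intro p _
      refine List.Nodup.map ?_ List.nodup_range
      intro a b hab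
      simpa using List.append_cancel_left hab
    · have h1 : (T13Level n).zipIdx.Pairwise (fun p q => p.1 ≠ q.1) := by
        have := ih
        rw [← List.zipIdx_map_fst 0 (T13Level n), List.Nodup, List.pairwise_map] at this
        exact this
      refine h1.imp ?_
      intro p q hpq
      rw [Function.onFun, List.disjoint_left]
      rintro z hz1 hz2
      simp only [List.mem_map, List.mem_range] at hz1 hz2
      obtain ⟨j, _, rfl⟩ := hz1
      obtain ⟨k, _, hk⟩ := hz2
      exact hpq (List.append_inj_left' hk.symm rfl)

lemma length_T13Level : ∀ n, (T13Level n).length = 2 ^ n := by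
  intro n
  induction n with
  | zero => simp [T13Level]
  | succ n ih =>
    rw [T13Level, List.length_flatMap]
    have h1 : ((T13Level n).zipIdx.map (List.length ∘ fun p : List ℕ × ℕ =>
        (List.range (childCount n p.2)).map fun j => p.1 ++ [j])) =
        (T13Level n).zipIdx.map (fun p => childCount n p.2) := by
      simp [Function.comp]
    simp only [Function.comp_def] at h1
    rw [h1]
    have h2 : (T13Level n).zipIdx.map (fun p : List ℕ × ℕ => childCount n p.2) =
        ((T13Level n).zipIdx.map Prod.snd).map (childCount n) := by
      rw [List.map_map]; rfl
    rw [h2, List.zipIdx_map_snd, ih, ← List.range_eq_range']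
    -- now: ((List.range (2 ^ n)).map (childCount n)).sum = 2 ^ (n + 1)
    rcases Nat.eq_zero_or_pos n with rfl | hn
    · decide
    · obtain ⟨m, rfl⟩ : ∃ m, n = m + 1 := ⟨n - 1, by omega⟩
      have hsplit : 2 ^ (m + 1) = 2 ^ m + 2 ^ m := by ring
      rw [hsplit, List.range_add, List.map_append, List.sum_append]
      have hA : ((List.range (2 ^ m)).map (childCount (m + 1))).sum = 2 ^ m := by
        have h : ∀ b ∈ (List.range (2 ^ m)).map (childCount (m + 1)), b = 1 := by
          intro b hb
          simp only [List.mem_map, List.mem_range] at hb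
          obtain ⟨i, hi, rfl⟩ := hb
          simp [childCount, hi]
        rw [List.eq_replicate_of_mem h, List.sum_replicate]; simp
      have hB : (((List.range (2 ^ m)).map (fun x => 2 ^ m + x)).map (childCount (m + 1))).sum
          = 3 * 2 ^ m := by
        have h : ∀ b ∈ ((List.range (2 ^ m)).map (fun x => 2 ^ m + x)).map (childCount (m + 1)),
            b = 3 := by
          intro b hb
          simp only [List.mem_map, List.mem_range] at hb
          obtain ⟨i, ⟨j, hj, rfl⟩, rfl⟩ := hb
          simp [childCount]
        rw [List.eq_replicate_of_mem h, List.sum_replicate]; simp [mul_comm]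
      rw [hA, hB]; ring

/-- The number of pieces into which the `k`-th edge (0-indexed) is subdivided. -/
noncomputable def ccount (s : ℝ) (k : ℕ) : ℕ := ⌈((k : ℝ) + 1) ^ s⌉₊

/-- Length of the expansion of a word of length `m` starting at level `k`. -/
noncomputable def LLk (s : ℝ) (k m : ℕ) : ℕ := ∑ j ∈ Finset.range m, ccount s (k + j)

/-- Depth of a level-`m` vertex of the 1-3 tree inside the subdivided tree. -/
noncomputable def LL (s : ℝ) (m : ℕ) : ℕ := LLk s 0 m

lemma ccount_pos (s : ℝ) (k : ℕ) : 1 ≤ ccount s k :=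
  Nat.ceil_pos.mpr (Real.rpow_pos_of_pos (by positivity) s)

lemma LLk_succ (s : ℝ) (k m : ℕ) : LLk s k (m + 1) = ccount s k + LLk s (k + 1) m := by
  have h1 : ∑ j ∈ Finset.range m, ccount s (k + (j + 1)) = LLk s (k + 1) m :=
    Finset.sum_congr rfl (fun j _ => by rw [show k + (j + 1) = k + 1 + j from by omega])
  calc LLk s k (m + 1)
      = (∑ j ∈ Finset.range m, ccount s (k + (j + 1))) + ccount s (k + 0) :=
        Finset.sum_range_succ' _ _
    _ = ccount s k + LLk s (k + 1) m := by rw [h1, add_zero, add_comm]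

lemma LLk_succ_right (s : ℝ) (k m : ℕ) : LLk s k (m + 1) = LLk s k m + ccount s (k + m) :=
  Finset.sum_range_succ _ _

lemma LLk_strictMono (s : ℝ) (k : ℕ) : StrictMono (LLk s k) := by
  apply strictMono_nat_of_lt_succ
  intro m
  rw [LLk_succ_right]
  have := ccount_pos s (k + m)
  omega

lemma le_LL (s : ℝ) (m : ℕ) : m ≤ LL s m := by
  have h : ∀ j ∈ Finset.range m, 1 ≤ ccount s (0 + j) := fun j _ => ccount_pos s _
  calc m = ∑ _j ∈ Finset.range m, 1 := by simp
    _ ≤ ∑ j ∈ Finset.range m, ccount s (0 + j) := Finset.sum_le_sum h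
    _ = LL s m := rfl

lemma expandPow_cons (s : ℝ) (k a : ℕ) (r : List ℕ) :
    expandPow s k (a :: r) = (a :: List.replicate (ccount s k - 1) 0) ++ expandPow s (k + 1) r :=
  rfl

lemma length_expandPow (s : ℝ) : ∀ (w : List ℕ) (k : ℕ),
    (expandPow s k w).length = LLk s k w.length := by
  intro w
  induction w with
  | nil => intro k; simp [expandPow, LLk]
  | cons a r ih =>
    intro k
    rw [expandPow_cons, List.length_append, ih (k + 1)]
    simp only [List.length_cons, List.length_replicate]
    rw [LLk_succ]
    have := ccount_pos s k
    omega

lemma expandPow_append (s : ℝ) : ∀ (w t : List ℕ) (k : ℕ),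
    expandPow s k (w ++ t) = expandPow s k w ++ expandPow s (k + w.length) t := by
  intro w
  induction w with
  | nil => intro t k; simp [expandPow]
  | cons a r ih =>
    intro t k
    have hk : k + (a :: r).length = k + 1 + r.length := by
      simp only [List.length_cons]; omega
    rw [List.cons_append, expandPow_cons, expandPow_cons, ih t (k + 1), List.append_assoc, hk]

lemma expandPow_take_inj (s : ℝ) : ∀ (w w' : List ℕ) (k t : ℕ),
    w.length = w'.length → LLk s k (w.length - 1) < t →
    (expandPow s k w).take t = (expandPow s k w').take t → w = w' := by
  intro w
  induction w with
  | nil =>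
    intro w' k t hlen _ _
    exact (List.length_eq_zero_iff.mp hlen.symm).symm
  | cons a r ih =>
    intro w' k t hlen ht htake
    obtain ⟨a', r', rfl⟩ : ∃ b r', w' = b :: r' := by
      cases w' with
      | nil => simp at hlen
      | cons b r' => exact ⟨b, r', rfl⟩
    have hlr : r.length = r'.length := by simpa using hlen
    have hc := ccount_pos s k
    have ht1 : 1 ≤ t := by
      have : 0 ≤ LLk s k ((a :: r).length - 1) := Nat.zero_le _
      omega
    obtain ⟨t', rfl⟩ : ∃ t', t = t' + 1 := ⟨t - 1, by omega⟩
    rw [expandPow_cons, expandPow_cons] at htake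
    simp only [List.cons_append, List.take_succ_cons] at htake
    obtain ⟨haa, htail⟩ : a = a' ∧
        (List.replicate (ccount s k - 1) 0 ++ expandPow s (k + 1) r).take t' =
        (List.replicate (ccount s k - 1) 0 ++ expandPow s (k + 1) r').take t' := by
      exact ⟨by injection htake, by injection htake⟩
    subst haa
    rw [List.take_append, List.take_append] at htail
    simp only [List.length_replicate] at htail
    have htail2 : (expandPow s (k + 1) r).take (t' - (ccount s k - 1)) =
        (expandPow s (k + 1) r').take (t' - (ccount s k - 1)) :=
      List.append_cancel_left htail
    cases r with
    | nil =>
      have : r' = [] := List.length_eq_zero_iff.mp hlr.symm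
      rw [this]
    | cons b r₂ =>
      have ht' : LLk s k (r₂.length + 1) < t' + 1 := by
        simpa using ht
      rw [LLk_succ] at ht'
      have hlt : LLk s (k + 1) ((b :: r₂).length - 1) < t' - (ccount s k - 1) := by
        simp only [List.length_cons, Nat.add_sub_cancel]
        omega
      rw [ih r' (k + 1) (t' - (ccount s k - 1)) hlr hlt htail2]

/-- The level in the 1-3 tree corresponding to depth `n` in the subdivided tree. -/
noncomputable def mfun (s : ℝ) (n : ℕ) : ℕ := Nat.find (⟨n, le_LL s n⟩ : ∃ m, n ≤ LL s m)

lemma le_LL_mfun (s : ℝ) (n : ℕ) : n ≤ LL s (mfun s n) := Nat.find_spec (⟨n, le_LL s n⟩ : ∃ m, n ≤ LL s m)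

lemma LL_lt_of_lt_mfun {s : ℝ} {n m : ℕ} (h : m < mfun s n) : LL s m < n := by
  have := Nat.find_min (⟨n, le_LL s n⟩ : ∃ m, n ≤ LL s m) h
  omega

lemma mfun_le {s : ℝ} {n m : ℕ} (h : n ≤ LL s m) : mfun s n ≤ m :=
  Nat.find_min' _ h

lemma level_T0pow (s : ℝ) (n : ℕ) :
    level (T0pow s) n =
      (fun w => (expandPow s 0 w).take n) '' {w | w ∈ T13Level (mfun s n)} := by
  ext u
  constructor
  · rintro ⟨⟨w, hwT, hpre⟩, hlen⟩
    obtain ⟨m', hwm'⟩ := hwT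
    have hwlen : w.length = m' := length_of_mem_T13Level m' w hwm'
    have hn_le : n ≤ LL s m' := by
      have h1 : u.length ≤ (expandPow s 0 w).length := hpre.length_le
      rw [length_expandPow, hwlen] at h1
      rw [← hlen]
      exact h1
    have hm : mfun s n ≤ m' := mfun_le hn_le
    have hw₀ : w.take (mfun s n) ∈ T13Level (mfun s n) :=
      take_mem_T13Level m' w hwm' _ hm
    refine ⟨w.take (mfun s n), hw₀, ?_⟩
    have hsplit : expandPow s 0 w =
        expandPow s 0 (w.take (mfun s n)) ++
          expandPow s (0 + (w.take (mfun s n)).length) (w.drop (mfun s n)) := by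
      conv_lhs => rw [← List.take_append_drop (mfun s n) w]
      exact expandPow_append s _ _ 0
    have htklen : (w.take (mfun s n)).length = mfun s n := by
      rw [List.length_take]; omega
    have hlen₀ : (expandPow s 0 (w.take (mfun s n))).length = LL s (mfun s n) := by
      rw [length_expandPow, htklen]; rfl
    have hu : u = (expandPow s 0 w).take n := by
      rw [← hlen]
      exact List.prefix_iff_eq_take.mp hpre
    show (expandPow s 0 (w.take (mfun s n))).take n = u
    rw [hu, hsplit, List.take_append]
    have hz : n - (expandPow s 0 (w.take (mfun s n))).length = 0 := by
      rw [hlen₀]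
      have := le_LL_mfun s n
      omega
    rw [hz]
    simp
  · rintro ⟨w, hw, rfl⟩
    have hwlen : w.length = mfun s n := length_of_mem_T13Level _ w hw
    have hexlen : (expandPow s 0 w).length = LL s (mfun s n) := by
      rw [length_expandPow, hwlen]; rfl
    refine ⟨⟨w, ⟨mfun s n, hw⟩, List.take_prefix _ _⟩, ?_⟩
    rw [List.length_take, hexlen]
    have := le_LL_mfun s n
    omega

lemma finite_level_T0pow (s : ℝ) (n : ℕ) : (level (T0pow s) n).Finite := by
  rw [level_T0pow]
  exact Set.Finite.image _ (T13Level (mfun s n)).finite_toSet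

lemma card_level_T0pow (s : ℝ) (n : ℕ) :
    Nat.card (level (T0pow s) n) = 2 ^ mfun s n := by
  rw [level_T0pow]
  have hinj : Set.InjOn (fun w => (expandPow s 0 w).take n)
      {w | w ∈ T13Level (mfun s n)} := by
    intro w hw w' hw' heq
    have h1 : w.length = mfun s n := length_of_mem_T13Level _ w hw
    have h2 : w'.length = mfun s n := length_of_mem_T13Level _ w' hw'
    rcases Nat.eq_zero_or_pos (mfun s n) with h0 | h0
    · rw [List.length_eq_zero_iff.mp (by omega : w.length = 0),
        List.length_eq_zero_iff.mp (by omega : w'.length = 0)]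
    · refine expandPow_take_inj s w w' 0 n (h1.trans h2.symm) ?_ heq
      rw [h1]
      exact LL_lt_of_lt_mfun (by omega)
  rw [Nat.card_coe_set_eq, Set.ncard_image_of_injOn hinj]
  have hset : {w | w ∈ T13Level (mfun s n)} =
      ((T13Level (mfun s n)).toFinset : Set (List ℕ)) := by
    ext w; simp
  rw [hset, Set.ncard_coe_finset, List.toFinset_card_of_nodup (nodup_T13Level _),
    length_T13Level]

lemma tsum_level_T0pow (s : ℝ) (n : ℕ) (c : ℝ≥0∞) :
    (∑' _e : level (T0pow s) n, c) = (2 : ℝ≥0∞) ^ mfun s n * c := by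
  haveI : Fintype (level (T0pow s) n) := (finite_level_T0pow s n).fintype
  rw [tsum_fintype, Finset.sum_const, nsmul_eq_mul]
  congr 1
  rw [Finset.card_univ, ← Nat.card_eq_fintype_card, card_level_T0pow]
  push_cast
  ring

lemma ccount_le_real (s : ℝ) (k : ℕ) : (ccount s k : ℝ) ≤ ((k : ℝ) + 1) ^ s + 1 := by
  have h0 : (0 : ℝ) ≤ ((k : ℝ) + 1) ^ s :=
    (Real.rpow_pos_of_pos (by positivity) s).le
  exact (Nat.ceil_lt_add_one h0).le

lemma real_rpow_le_ccount (s : ℝ) (k : ℕ) : ((k : ℝ) + 1) ^ s ≤ (ccount s k : ℝ) :=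
  Nat.le_ceil _

lemma LL_cast (s : ℝ) (m : ℕ) : (LL s m : ℝ) = ∑ j ∈ Finset.range m, (ccount s (0 + j) : ℝ) := by
  rw [LL, LLk, Nat.cast_sum]

lemma LL_le_real {s : ℝ} (hs : 0 < s) {m : ℕ} (hm : 1 ≤ m) :
    (LL s m : ℝ) ≤ 2 * (m : ℝ) ^ (1 + s) := by
  have hm0 : (0 : ℝ) < m := by exact_mod_cast hm
  have hterm : ∀ j ∈ Finset.range m, (ccount s (0 + j) : ℝ) ≤ (m : ℝ) ^ s + 1 := by
    intro j hj
    rw [Finset.mem_range] at hj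
    have hb : ((0 + j : ℕ) : ℝ) + 1 ≤ (m : ℝ) := by
      have : (0 + j : ℕ) + 1 ≤ m := by omega
      exact_mod_cast this
    have hr := Real.rpow_le_rpow (by positivity : (0:ℝ) ≤ ((0 + j : ℕ) : ℝ) + 1) hb hs.le
    have hc := ccount_le_real s (0 + j)
    linarith
  have hsum : (LL s m : ℝ) ≤ (m : ℝ) * ((m : ℝ) ^ s + 1) := by
    rw [LL_cast]
    calc ∑ j ∈ Finset.range m, (ccount s (0 + j) : ℝ)
        ≤ ∑ _j ∈ Finset.range m, ((m : ℝ) ^ s + 1) := Finset.sum_le_sum hterm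
      _ = (m : ℝ) * ((m : ℝ) ^ s + 1) := by
          rw [Finset.sum_const, Finset.card_range, nsmul_eq_mul]
  have h1 : (m : ℝ) ^ (1 + s) = (m : ℝ) * (m : ℝ) ^ s := by
    rw [Real.rpow_add hm0, Real.rpow_one]
  have h2 : (m : ℝ) ≤ (m : ℝ) ^ (1 + s) := by
    calc (m : ℝ) = (m : ℝ) ^ (1 : ℝ) := (Real.rpow_one _).symm
      _ ≤ (m : ℝ) ^ (1 + s) :=
        Real.rpow_le_rpow_of_exponent_le (by exact_mod_cast hm) (by linarith)
  nlinarith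

lemma LL_ge_real {s : ℝ} (hs : 0 < s) (m : ℕ) :
    (((m - 1 : ℕ) : ℝ) / 2) ^ (1 + s) ≤ (LL s m : ℝ) := by
  rcases Nat.lt_or_ge m 2 with hm | hm
  · have : ((m - 1 : ℕ) : ℝ) = 0 := by
      have : m - 1 = 0 := by omega
      simp [this]
    rw [this]
    simp only [zero_div]
    rw [Real.zero_rpow (by positivity)]
    positivity
  · set x : ℝ := ((m - 1 : ℕ) : ℝ) / 2 with hx
    have hx0 : 0 < x := by
      have : (1 : ℝ) ≤ ((m - 1 : ℕ) : ℝ) := by exact_mod_cast by omega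
      rw [hx]; linarith
    set h := m / 2 with hh
    have hterm : ∀ j ∈ Finset.Ico h m, x ^ s ≤ (ccount s (0 + j) : ℝ) := by
      intro j hj
      rw [Finset.mem_Ico] at hj
      refine le_trans ?_ (real_rpow_le_ccount s (0 + j))
      apply Real.rpow_le_rpow hx0.le ?_ hs.le
      have hj2 : (2 : ℝ) * ((h : ℕ) : ℝ) + 2 ≥ ((m - 1 : ℕ) : ℝ) := by
        exact_mod_cast by omega
      have hjh : ((h : ℕ) : ℝ) ≤ (j : ℝ) := by exact_mod_cast hj.1
      rw [hx]
      push_cast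
      linarith
  -- sum over Ico has card m - h, each term ≥ x ^ s
    have hsub : Finset.Ico h m ⊆ Finset.range m := by
      rw [Finset.range_eq_Ico]
      exact Finset.Ico_subset_Ico (Nat.zero_le _) le_rfl
    have h1 : ∑ j ∈ Finset.Ico h m, (ccount s (0 + j) : ℝ) ≤ (LL s m : ℝ) := by
      rw [LL_cast]
      exact Finset.sum_le_sum_of_subset_of_nonneg hsub (fun j _ _ => by positivity)
    have h2 : ((m - h : ℕ) : ℝ) * x ^ s ≤ ∑ j ∈ Finset.Ico h m, (ccount s (0 + j) : ℝ) := by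
      calc ((m - h : ℕ) : ℝ) * x ^ s
          = ∑ _j ∈ Finset.Ico h m, x ^ s := by
            rw [Finset.sum_const, Nat.card_Ico, nsmul_eq_mul]
        _ ≤ _ := Finset.sum_le_sum hterm
    have h3 : x ≤ ((m - h : ℕ) : ℝ) := by
      have : m - 1 ≤ 2 * (m - h) := by omega
      have h4 : ((m - 1 : ℕ) : ℝ) ≤ 2 * ((m - h : ℕ) : ℝ) := by exact_mod_cast this
      rw [hx]; linarith
    have hxs : x ^ (1 + s) = x * x ^ s := by
      rw [Real.rpow_add hx0, Real.rpow_one]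
    have hxspos : (0 : ℝ) ≤ x ^ s := by positivity
    calc x ^ (1 + s) = x * x ^ s := hxs
      _ ≤ ((m - h : ℕ) : ℝ) * x ^ s := mul_le_mul_of_nonneg_right h3 hxspos
      _ ≤ _ := le_trans h2 h1

lemma mfun_pos {s : ℝ} {n : ℕ} (hn : 1 ≤ n) : 1 ≤ mfun s n := by
  by_contra h
  have h0 : mfun s n = 0 := by omega
  have := le_LL_mfun s n
  rw [h0] at this
  simp [LL, LLk] at this
  omega

lemma mfun_lower {s : ℝ} (hs : 0 < s) {n : ℕ} (hn : 1 ≤ n) :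
    ((n : ℝ) / 2) ^ (1 / (1 + s)) ≤ (mfun s n : ℝ) := by
  set m := mfun s n with hm
  have hm1 : 1 ≤ m := mfun_pos hn
  have h1 : (n : ℝ) ≤ 2 * (m : ℝ) ^ (1 + s) :=
    le_trans (by exact_mod_cast le_LL_mfun s n) (LL_le_real hs hm1)
  have h2 : (n : ℝ) / 2 ≤ (m : ℝ) ^ (1 + s) := by linarith
  have h3 : ((n : ℝ) / 2) ^ (1 / (1 + s)) ≤ ((m : ℝ) ^ (1 + s)) ^ (1 / (1 + s)) :=
    Real.rpow_le_rpow (by positivity) h2 (by positivity)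
  refine h3.trans_eq ?_
  rw [← Real.rpow_mul (by positivity)]
  rw [show (1 + s) * (1 / (1 + s)) = 1 by field_simp]
  exact Real.rpow_one _

lemma mfun_tendsto_atTop (s : ℝ) : Tendsto (mfun s) atTop atTop := by
  rw [tendsto_atTop_atTop]
  intro B
  refine ⟨LL s B + 1, fun n hn => ?_⟩
  by_contra h
  push_neg at h
  have h1 : LL s (mfun s n) ≤ LL s B := by
    have : Monotone (LL s) := (LLk_strictMono s 0).monotone
    exact this h.le
  have := le_LL_mfun s n
  omega

lemma n_lower {s : ℝ} (hs : 0 < s) {n : ℕ} (hn : 1 ≤ n) :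
    (((mfun s n - 2 : ℕ) : ℝ) / 2) ^ (1 + s) ≤ (n : ℝ) := by
  set m := mfun s n with hm
  have hm1 : 1 ≤ m := mfun_pos hn
  have h1 : LL s (m - 1) < n := LL_lt_of_lt_mfun (by omega)
  have h2 : (((m - 1 - 1 : ℕ) : ℝ) / 2) ^ (1 + s) ≤ (LL s (m - 1) : ℝ) :=
    LL_ge_real hs (m - 1)
  have h3 : m - 1 - 1 = m - 2 := by omega
  rw [h3] at h2
  refine h2.trans ?_
  exact_mod_cast h1.le

open Topology in
lemma F_eq (s lam : ℝ) (n : ℕ) :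
    (∑' _e : level (T0pow s) n, ENNReal.ofReal (Real.exp (-(n : ℝ) ^ lam)))
      = ENNReal.ofReal (Real.exp ((mfun s n : ℝ) * Real.log 2 - (n : ℝ) ^ lam)) := by
  rw [tsum_level_T0pow]
  have h2 : (2 : ℝ≥0∞) ^ mfun s n = ENNReal.ofReal ((2 : ℝ) ^ mfun s n) := by
    rw [ENNReal.ofReal_pow (by norm_num : (0 : ℝ) ≤ 2)]
    norm_num
  rw [h2, ← ENNReal.ofReal_mul (by positivity)]
  congr 1
  have h3 : (2 : ℝ) ^ mfun s n = Real.exp ((mfun s n : ℝ) * Real.log 2) := by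
    rw [Real.exp_nat_mul, Real.exp_log (by norm_num : (0 : ℝ) < 2)]
  rw [h3, ← Real.exp_add]
  ring_nf

lemma mem_S_of_lt {s : ℝ} (hs : 0 < s) {lam : ℝ} (h0 : 0 < lam) (hlt : lam < 1 / (1 + s)) :
    0 < Filter.liminf
      (fun n => ∑' _e : level (T0pow s) n, ENNReal.ofReal (Real.exp (-(n : ℝ) ^ lam))) atTop := by
  have h1s : (0 : ℝ) < 1 + s := by linarith
  set c : ℝ := 1 / (1 + s) with hcdef
  have hc0 : 0 < c := by positivity
  have hc1 : c ≤ 1 := by rw [hcdef, div_le_one h1s]; linarith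
  have hlog2 : (0 : ℝ) < Real.log 2 := Real.log_pos (by norm_num)
  have hev : ∀ᶠ n : ℕ in atTop, (1 : ℝ≥0∞) ≤
      ∑' _e : level (T0pow s) n, ENNReal.ofReal (Real.exp (-(n : ℝ) ^ lam)) := by
    have htd : Tendsto (fun n : ℕ => (n : ℝ) ^ (c - lam)) atTop atTop :=
      (tendsto_rpow_atTop (by linarith)).comp tendsto_natCast_atTop_atTop
    filter_upwards [htd.eventually_ge_atTop (2 / Real.log 2), eventually_ge_atTop 1]
      with n hn1 hn2
    rw [F_eq, ENNReal.one_le_ofReal]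
    apply Real.one_le_exp
    rw [sub_nonneg]
    -- goal : n ^ lam ≤ mfun s n * log 2
    have hn0 : (0 : ℝ) < n := by exact_mod_cast hn2
    have hmlow : ((n : ℝ) / 2) ^ c ≤ (mfun s n : ℝ) := mfun_lower hs hn2
    have hhalf : (n : ℝ) ^ c / 2 ≤ ((n : ℝ) / 2) ^ c := by
      rw [Real.div_rpow hn0.le (by norm_num : (0 : ℝ) ≤ 2)]
      have h2c : (2 : ℝ) ^ c ≤ 2 := by
        calc (2 : ℝ) ^ c ≤ (2 : ℝ) ^ (1 : ℝ) :=
          Real.rpow_le_rpow_of_exponent_le (by norm_num) hc1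
          _ = 2 := Real.rpow_one 2
      have h2cpos : (0 : ℝ) < (2 : ℝ) ^ c := by positivity
      have hnum : (0 : ℝ) ≤ (n : ℝ) ^ c := by positivity
      exact div_le_div_of_nonneg_left hnum h2cpos h2c
    have hsplit : (n : ℝ) ^ c = (n : ℝ) ^ lam * (n : ℝ) ^ (c - lam) := by
      rw [← Real.rpow_add hn0]; ring_nf
    have h4 : (n : ℝ) ^ lam * (2 / Real.log 2) ≤ (n : ℝ) ^ c := by
      rw [hsplit]
      exact mul_le_mul_of_nonneg_left hn1 (by positivity)
    have h5 : (n : ℝ) ^ lam ≤ (n : ℝ) ^ c * (Real.log 2 / 2) := by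
      have h6 := mul_le_mul_of_nonneg_right h4 (by positivity : (0 : ℝ) ≤ Real.log 2 / 2)
      calc (n : ℝ) ^ lam = (n : ℝ) ^ lam * (2 / Real.log 2) * (Real.log 2 / 2) := by
            field_simp
        _ ≤ (n : ℝ) ^ c * (Real.log 2 / 2) := h6
    have h7 : ((n : ℝ) ^ c / 2) * Real.log 2 ≤ (mfun s n : ℝ) * Real.log 2 :=
      mul_le_mul_of_nonneg_right (hhalf.trans hmlow) hlog2.le
    nlinarith
  have hlim := Filter.le_liminf_of_le (by isBoundedDefault) hev
  exact lt_of_lt_of_le zero_lt_one hlim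

open Topology in
lemma tendsto_zero_of_gt {s : ℝ} (hs : 0 < s) {lam : ℝ} (hgt : 1 / (1 + s) < lam) :
    Tendsto
      (fun n => ∑' _e : level (T0pow s) n, ENNReal.ofReal (Real.exp (-(n : ℝ) ^ lam)))
      atTop (𝓝 0) := by
  have h1s : (0 : ℝ) < 1 + s := by linarith
  have hlam0 : (0 : ℝ) < lam := lt_trans (by positivity) hgt
  set b : ℝ := lam * (1 + s) with hbdef
  have hb1 : 1 < b := by
    rw [hbdef]
    rw [div_lt_iff₀ h1s] at hgt
    linarith
  have hlog2 : (0 : ℝ) < Real.log 2 := Real.log_pos (by norm_num)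
  -- the real-valued exponent tends to -∞
  have hφ : Tendsto (fun x : ℝ => x * Real.log 2 - (x / 4) ^ b) atTop atBot := by
    have hg : Tendsto (fun x : ℝ => Real.log 2 - x ^ (b - 1) / (4 : ℝ) ^ b) atTop atBot := by
      have h1 : Tendsto (fun x : ℝ => x ^ (b - 1)) atTop atTop :=
        tendsto_rpow_atTop (by linarith)
      have h2 := h1.atTop_div_const (by positivity : (0 : ℝ) < (4 : ℝ) ^ b)
      have h3 : Tendsto (fun x : ℝ => -(x ^ (b - 1) / (4 : ℝ) ^ b)) atTop atBot :=
        tendsto_neg_atTop_atBot.comp h2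
      have h4 := tendsto_atBot_add_const_left atTop (Real.log 2) h3
      refine h4.congr (fun x => ?_)
      ring
    have hmul := Filter.Tendsto.atTop_mul_atBot₀ (tendsto_id (α := ℝ)) hg
    apply (Filter.tendsto_congr' ?_).mp hmul
    filter_upwards [eventually_ge_atTop (1 : ℝ)] with x hx
    have hx0 : (0 : ℝ) < x := by linarith
    have hxb : x ^ b = x * x ^ (b - 1) := by
      rw [show b = 1 + (b - 1) by ring, Real.rpow_add hx0, Real.rpow_one]
      ring_nf
    rw [Real.div_rpow hx0.le (by norm_num : (0 : ℝ) ≤ 4)]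
    rw [hxb]
    field_simp
    simp only [id_eq]
    ring
  have hψ : Tendsto (fun m : ℕ => (m : ℝ) * Real.log 2 - (((m - 2 : ℕ) : ℝ) / 2) ^ b)
      atTop atBot := by
    apply tendsto_atBot_mono' atTop ?_ (hφ.comp tendsto_natCast_atTop_atTop)
    filter_upwards [eventually_ge_atTop 4] with m hm
    simp only [Function.comp]
    have h1 : (m : ℝ) / 4 ≤ ((m - 2 : ℕ) : ℝ) / 2 := by
      have h0 : m ≤ 2 * (m - 2) := by omega
      have h2 : (m : ℝ) ≤ 2 * ((m - 2 : ℕ) : ℝ) := by exact_mod_cast h0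
      linarith
    have h2 := Real.rpow_le_rpow (by positivity) h1 (by linarith : (0 : ℝ) ≤ b)
    linarith
  have ha : Tendsto (fun n : ℕ => (mfun s n : ℝ) * Real.log 2 - (n : ℝ) ^ lam)
      atTop atBot := by
    apply tendsto_atBot_mono' atTop ?_ (hψ.comp (mfun_tendsto_atTop s))
    filter_upwards [eventually_ge_atTop 1] with n hn
    simp only [Function.comp]
    have h1 := n_lower hs hn
    have hx0 : (0 : ℝ) ≤ ((mfun s n - 2 : ℕ) : ℝ) / 2 := by positivity
    have h3 := Real.rpow_le_rpow (by positivity) h1 hlam0.le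
    rw [← Real.rpow_mul hx0, show (1 + s) * lam = b by rw [hbdef]; ring] at h3
    linarith
  have hexp : Tendsto
      (fun n : ℕ => Real.exp ((mfun s n : ℝ) * Real.log 2 - (n : ℝ) ^ lam))
      atTop (𝓝 0) := Real.tendsto_exp_atBot.comp ha
  have hof := ENNReal.tendsto_ofReal hexp
  rw [ENNReal.ofReal_zero] at hof
  apply hof.congr (fun n => ?_)
  exact (F_eq s lam n).symm

/-- Subdividing each level-`n` edge of the 1-3 tree into a path of `⌈n^s⌉` edges yields a
tree with intermediate growth rate `1 / (1 + s)`. -/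
theorem Igr_T0pow (s : ℝ) (hs : 0 < s) : Igr (T0pow s) = 1 / (1 + s) := by
  have h1s : (0 : ℝ) < 1 + s := by linarith
  have hc0 : (0 : ℝ) < 1 / (1 + s) := by positivity
  rw [Igr]
  set S : Set ℝ := {lam : ℝ | 0 < lam ∧
    0 < Filter.liminf
      (fun n => ∑' _e : level (T0pow s) n, ENNReal.ofReal (Real.exp (-(n : ℝ) ^ lam)))
      atTop} with hS
  have hub : ∀ lam ∈ S, lam ≤ 1 / (1 + s) := by
    intro lam hlam
    by_contra h
    push_neg at h
    have ht := tendsto_zero_of_gt hs h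
    have h2 := hlam.2
    rw [ht.liminf_eq] at h2
    exact lt_irrefl 0 h2
  have hsub : Set.Ioo (0 : ℝ) (1 / (1 + s)) ⊆ S := fun lam hlam =>
    ⟨hlam.1, mem_S_of_lt hs hlam.1 hlam.2⟩
  have hbdd : BddAbove S := ⟨1 / (1 + s), hub⟩
  have hne : S.Nonempty := ⟨1 / (1 + s) / 2, hsub ⟨by positivity, by linarith⟩⟩
  apply le_antisymm
  · exact csSup_le hne hub
  · have hIoo : (Set.Ioo (0 : ℝ) (1 / (1 + s))).Nonempty :=
      ⟨1 / (1 + s) / 2, by constructor <;> [positivity; linarith]⟩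
    have h1 := csSup_le_csSup hbdd hIoo hsub
    rwa [csSup_Ioo hc0] at h1

end TreeNotions
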